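/- arXiv:2602.17892 — 4 statements merged into one kernel-verified Lean document; each statement's English description precedes it below -/
import Mathlib

section
/- Let A be a real m×n matrix, B a real n×m matrix, v ∈ ℝ^m, and k a natural number. Then the image under the linear map x ↦ Bx of the Krylov subspace K_k(AB, v) equals the Krylov subspace K_k(BA, Bv); that is, B · span{v, (AB)v, …, (AB)^{k−1}v} = span{Bv, (BA)(Bv), …, (BA)^{k−1}(Bv)}. In particular, every AB-GMRES iterate x_k = B u_k with u_k ∈ K_k(AB, b) lies in K_k(BA, Bb). -/
open Matrix

/-- The `k`-th Krylov subspace `K_k(M, v) = span {v, Mv, …, M^{k-1} v}`. -/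
def krylov {N : ℕ} (M : Matrix (Fin N) (Fin N) ℝ) (v : Fin N → ℝ) (k : ℕ) :
    Submodule ℝ (Fin N → ℝ) :=
  Submodule.span ℝ (Set.range fun i : Fin k => (M ^ (i : ℕ)).mulVec v)

lemma comm_pow {m n : ℕ} (A : Matrix (Fin m) (Fin n) ℝ) (B : Matrix (Fin n) (Fin m) ℝ)
    (i : ℕ) : B * (A * B) ^ i = (B * A) ^ i * B := by
  induction i with
  | zero => simp
  | succ i ih =>
    rw [pow_succ, pow_succ, ← Matrix.mul_assoc, ih]
    simp [Matrix.mul_assoc]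

lemma map_krylov {m n : ℕ} (A : Matrix (Fin m) (Fin n) ℝ) (B : Matrix (Fin n) (Fin m) ℝ)
    (v : Fin m → ℝ) (k : ℕ) :
    Submodule.map B.mulVecLin (krylov (A * B) v k) = krylov (B * A) (B.mulVec v) k := by
  unfold krylov
  rw [Submodule.map_span]
  congr 1
  rw [← Set.range_comp]
  ext x
  simp only [Set.mem_range, Function.comp]
  constructor <;> rintro ⟨i, rfl⟩ <;> refine ⟨i, ?_⟩ <;>
    simp [Matrix.mulVecLin_apply, Matrix.mulVec_mulVec, comm_pow A B]

/-- The image under `x ↦ Bx` of the Krylov subspace `K_k(AB, v)` equals `K_k(BA, Bv)`;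
in particular, every AB-GMRES iterate `x_k = B u_k` with `u_k ∈ K_k(AB, b)` lies in
`K_k(BA, Bb)`. -/
theorem stmt_1 (m n : ℕ) (A : Matrix (Fin m) (Fin n) ℝ) (B : Matrix (Fin n) (Fin m) ℝ)
    (v : Fin m → ℝ) (k : ℕ) :
    Submodule.map B.mulVecLin (krylov (A * B) v k) = krylov (B * A) (B.mulVec v) k ∧
    ∀ b : Fin m → ℝ, ∀ u : Fin m → ℝ, u ∈ krylov (A * B) b k →
      B.mulVec u ∈ krylov (B * A) (B.mulVec b) k := by
  refine ⟨map_krylov A B v k, fun b u hu => ?_⟩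
  rw [← map_krylov A B b k]
  exact ⟨u, hu, rfl⟩
end

section
/- Let A ∈ ℝ^{m×n} be such that AAᵀ is invertible, let b ∈ ℝ^m, λ > 0, and let S be a linear subspace of ℝ^m. Then z* ∈ S minimizes z ↦ ‖AAᵀz − b‖₂² + λ²‖z‖₂² over S if and only if x* = Aᵀ z* minimizes x ↦ ‖Ax − b‖₂² + λ² ‖(AAᵀ)⁻¹ A x‖₂² over the image subspace AᵀS = {Aᵀz : z ∈ S}. (With S = K_k(AAᵀ, b) and AᵀS = K_k(AᵀA, Aᵀb), this is the characterization of the hybrid AB-GMRES iterate with matched backprojector B = Aᵀ, whose penalty ‖(Aᵀ)†x‖₂ differs from the penalty ‖x‖₂ of hybrid LSQR.) -/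
open Matrix

/-- The Euclidean norm `‖v‖₂ = sqrt (∑ i, v i ^ 2)` of a real vector. -/
noncomputable def enorm {ι : Type*} [Fintype ι] (v : ι → ℝ) : ℝ :=
  Real.sqrt (∑ i, v i ^ 2)

/-
The substitution `x = Aᵀz` maps `S` onto `AᵀS`, and along it the AB-GMRES
objective becomes the Tikhonov objective for `AAᵀ`: `AAᵀz` is the residual term, and
`(AAᵀ)⁻¹A(Aᵀz) = z` recovers the penalty. Minimizers therefore correspond.
-/

theorem isMinOn_image_iff {α β γ : Type*} [Preorder γ] {f : α → β} {g : β → γ}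
    {s : Set α} {a : α} : IsMinOn g (f '' s) (f a) ↔ IsMinOn (g ∘ f) s a := by
  simp only [isMinOn_iff, Set.forall_mem_image, Function.comp_apply]

theorem Matrix.nonsing_inv_mulVec_mulVec {ι R : Type*} [Fintype ι] [DecidableEq ι] [CommRing R]
    {M : Matrix ι ι R} (hM : IsUnit M) (v : ι → R) : M⁻¹ *ᵥ (M *ᵥ v) = v := by
  rw [mulVec_mulVec, nonsing_inv_mul M ((isUnit_iff_isUnit_det M).mp hM), one_mulVec]

section Objectives

variable {ι κ : Type*} [Fintype ι] [Fintype κ]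

noncomputable def tikhonovObjective (M : Matrix ι κ ℝ) (b : ι → ℝ) (lam : ℝ) (z : κ → ℝ) : ℝ :=
  _root_.enorm (M *ᵥ z - b) ^ 2 + lam ^ 2 * _root_.enorm z ^ 2

/-- `(AAᵀ)⁻¹A` is the pseudoinverse `(Aᵀ)†` when `A` has full row rank. -/
noncomputable def abgmresObjective [DecidableEq ι] (A : Matrix ι κ ℝ) (b : ι → ℝ) (lam : ℝ)
    (x : κ → ℝ) : ℝ :=
  _root_.enorm (A *ᵥ x - b) ^ 2 + lam ^ 2 * _root_.enorm ((A * Aᵀ)⁻¹ *ᵥ (A *ᵥ x)) ^ 2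

theorem abgmresObjective_comp_transpose_mulVec [DecidableEq ι] {A : Matrix ι κ ℝ}
    (hA : IsUnit (A * Aᵀ)) (b : ι → ℝ) (lam : ℝ) :
    abgmresObjective A b lam ∘ Aᵀ.mulVec = tikhonovObjective (A * Aᵀ) b lam := by
  ext z
  simp only [Function.comp_apply, abgmresObjective, tikhonovObjective, mulVec_mulVec,
    nonsing_inv_mulVec_mulVec hA]

end Objectives

theorem stmt_10_general (m n : ℕ) (A : Matrix (Fin m) (Fin n) ℝ)
    (hA : IsUnit (A * Aᵀ)) (b : Fin m → ℝ) (lam : ℝ)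
    (S : Submodule ℝ (Fin m → ℝ)) (zstar : Fin m → ℝ) :
    (∀ z ∈ S,
      _root_.enorm ((A * Aᵀ).mulVec zstar - b) ^ 2 + lam ^ 2 * _root_.enorm zstar ^ 2 ≤
        _root_.enorm ((A * Aᵀ).mulVec z - b) ^ 2 + lam ^ 2 * _root_.enorm z ^ 2) ↔
    (∀ x ∈ Submodule.map (Aᵀ).mulVecLin S,
      _root_.enorm (A.mulVec (Aᵀ.mulVec zstar) - b) ^ 2 +
          lam ^ 2 * _root_.enorm ((A * Aᵀ)⁻¹.mulVec (A.mulVec (Aᵀ.mulVec zstar))) ^ 2 ≤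
        _root_.enorm (A.mulVec x - b) ^ 2 +
          lam ^ 2 * _root_.enorm ((A * Aᵀ)⁻¹.mulVec (A.mulVec x)) ^ 2) := by
  have h := isMinOn_image_iff (f := Aᵀ.mulVec) (g := abgmresObjective A b lam)
    (s := S) (a := zstar)
  rw [abgmresObjective_comp_transpose_mulVec hA, isMinOn_iff, isMinOn_iff] at h
  exact h.symm

/-- Characterization of the hybrid AB-GMRES iterate with matched backprojector `B = Aᵀ`:
if `AAᵀ` is invertible and `z* ∈ S`, then `z*` minimizes `z ↦ ‖AAᵀz − b‖₂² + λ²‖z‖₂²`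
over the subspace `S ⊆ ℝ^m` iff `x* = Aᵀz*` minimizes
`x ↦ ‖Ax − b‖₂² + λ²‖(AAᵀ)⁻¹Ax‖₂²` over the image subspace `AᵀS`. -/
theorem stmt_10 (m n : ℕ) (A : Matrix (Fin m) (Fin n) ℝ)
    (hA : IsUnit (A * Aᵀ)) (b : Fin m → ℝ) (lam : ℝ) (hlam : 0 < lam)
    (S : Submodule ℝ (Fin m → ℝ)) (zstar : Fin m → ℝ) (hz : zstar ∈ S) :
    (∀ z ∈ S,
      _root_.enorm ((A * Aᵀ).mulVec zstar - b) ^ 2 + lam ^ 2 * _root_.enorm zstar ^ 2 ≤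
        _root_.enorm ((A * Aᵀ).mulVec z - b) ^ 2 + lam ^ 2 * _root_.enorm z ^ 2) ↔
    (∀ x ∈ Submodule.map (Aᵀ).mulVecLin S,
      _root_.enorm (A.mulVec (Aᵀ.mulVec zstar) - b) ^ 2 +
          lam ^ 2 * _root_.enorm ((A * Aᵀ)⁻¹.mulVec (A.mulVec (Aᵀ.mulVec zstar))) ^ 2 ≤
        _root_.enorm (A.mulVec x - b) ^ 2 +
          lam ^ 2 * _root_.enorm ((A * Aᵀ)⁻¹.mulVec (A.mulVec x)) ^ 2) :=
  stmt_10_general m n A hA b lam S zstar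
end

section
/- Let A ∈ ℝ^{m×n}, b ∈ ℝ^m, and k a natural number. If u* minimizes u ↦ ‖AAᵀu − b‖₂ over the Krylov subspace K_k(AAᵀ, b), then x* = Aᵀ u* minimizes x ↦ ‖Ax − b‖₂ over the Krylov subspace K_k(AᵀA, Aᵀb). (This is the algebraic equivalence of AB-GMRES with matched backprojector B = Aᵀ and LSQR.) -/
open Matrix

/-- The Euclidean norm `‖v‖₂ = sqrt (∑ i, v i ^ 2)` of a real vector. -/
noncomputable def euclNorm {ι : Type*} [Fintype ι] (v : ι → ℝ) : ℝ :=
  Real.sqrt (∑ i, v i ^ 2)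

/-! `Aᵀ` maps `K_k(AAᵀ, b)` onto `K_k(AᵀA, Aᵀb)`, and the residual of `x = Aᵀu` for the
least-squares problem equals the residual of `u` for `AAᵀu = b`; so the two minimization
problems are the same problem in different coordinates. -/

theorem Matrix.mul_mul_pow_eq_pow_mul_mul {m n α : Type*} [Fintype m] [Fintype n]
    [DecidableEq m] [DecidableEq n] [Semiring α] (A : Matrix m n α) (B : Matrix n m α) (i : ℕ) :
    B * (A * B) ^ i = (B * A) ^ i * B := by
  induction i with
  | zero => simp
  | succ i ih => rw [pow_succ, pow_succ, ← Matrix.mul_assoc, ih, Matrix.mul_assoc, Matrix.mul_assoc,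
      Matrix.mul_assoc]

theorem krylov_map_mulVecLin {m n : ℕ} (A : Matrix (Fin m) (Fin n) ℝ)
    (B : Matrix (Fin n) (Fin m) ℝ) (b : Fin m → ℝ) (k : ℕ) :
    (krylov (A * B) b k).map B.mulVecLin = krylov (B * A) (B *ᵥ b) k := by
  rw [krylov, krylov, Submodule.map_span, ← Set.range_comp]
  congr 2
  funext i
  simp only [Function.comp_apply, mulVecLin_apply, mulVec_mulVec,
    mul_mul_pow_eq_pow_mul_mul]

/-- Algebraic equivalence of AB-GMRES with matched backprojector `B = Aᵀ` and LSQR: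
if `u*` minimizes `u ↦ ‖AAᵀu − b‖₂` over `K_k(AAᵀ, b)`, then `x* = Aᵀu*` minimizes
`x ↦ ‖Ax − b‖₂` over `K_k(AᵀA, Aᵀb)`. -/
theorem stmt_11 (m n : ℕ) (A : Matrix (Fin m) (Fin n) ℝ) (b : Fin m → ℝ) (k : ℕ)
    (ustar : Fin m → ℝ) (hu : ustar ∈ krylov (A * Aᵀ) b k)
    (hmin : ∀ u ∈ krylov (A * Aᵀ) b k,
      euclNorm ((A * Aᵀ).mulVec ustar - b) ≤ euclNorm ((A * Aᵀ).mulVec u - b)) :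
    Aᵀ.mulVec ustar ∈ krylov (Aᵀ * A) (Aᵀ.mulVec b) k ∧
    ∀ x ∈ krylov (Aᵀ * A) (Aᵀ.mulVec b) k,
      euclNorm (A.mulVec (Aᵀ.mulVec ustar) - b) ≤ euclNorm (A.mulVec x - b) := by
  rw [← krylov_map_mulVecLin]
  refine ⟨⟨ustar, hu, rfl⟩, ?_⟩
  rintro _ ⟨u, hu', rfl⟩
  simpa only [mulVecLin_apply, mulVec_mulVec] using hmin u hu'
end

section
/- Let A ∈ ℝ^{m×n}, B ∈ ℝ^{n×m}, and b ∈ ℝ^m. If the null space of B equals the null space of Aᵀ (as subspaces of ℝ^m), then for every x ∈ ℝ^n, BAx = Bb if and only if AᵀAx = Aᵀb; i.e., the unmatched system BAx = Bb has exactly the same solutions as the normal equations, so its solutions are precisely the least-squares solutions of Ax ≈ b. -/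
/-!
Equal kernels make `B` and `Aᵀ` vanish on the same residuals, so `B (A x - b) = 0` and
`Aᵀ (A x - b) = 0` are the same condition. The latter says the residual is orthogonal to the range
of `A`, which by the variational characterisation of orthogonal projection is exactly the
statement that `A x` is a closest point of that range to `b`.
-/

open Matrix

/-- The Euclidean norm `‖v‖₂ = sqrt (∑ i, v i ^ 2)` of a real vector. -/
noncomputable def enorm2 {ι : Type*} [Fintype ι] (v : ι → ℝ) : ℝ :=
  Real.sqrt (∑ i, v i ^ 2)

theorem LinearMap.apply_eq_apply_iff_of_ker_eq {R M N P : Type*} [Ring R] [AddCommGroup M]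
    [AddCommGroup N] [AddCommGroup P] [Module R M] [Module R N] [Module R P]
    {f : M →ₗ[R] N} {g : M →ₗ[R] P} (h : ker f = ker g) (v w : M) :
    f v = f w ↔ g v = g w := by
  rw [← sub_eq_zero, ← map_sub, ← mem_ker, h, mem_ker, map_sub, sub_eq_zero]

theorem LinearMap.forall_norm_sub_le_iff_inner_eq_zero {E F : Type*} [AddCommGroup E]
    [Module ℝ E] [NormedAddCommGroup F] [InnerProductSpace ℝ F] (T : E →ₗ[ℝ] F) (u : F) (x : E) :
    (∀ x', ‖u - T x‖ ≤ ‖u - T x'‖) ↔ ∀ y, inner ℝ (u - T x) (T y) = 0 := by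
  have hbdd : BddBelow (Set.range fun w : (range T : Set F) => ‖u - w‖) :=
    ⟨0, Set.forall_mem_range.2 fun _ => norm_nonneg _⟩
  have hproj :=
    Submodule.norm_eq_iInf_iff_real_inner_eq_zero (range T) (u := u) (mem_range_self T x)
  simp only [mem_range, forall_exists_index, forall_apply_eq_imp_iff] at hproj
  rw [← hproj]
  constructor
  · intro h
    refine le_antisymm (le_ciInf fun ⟨w, hw⟩ => ?_) (ciInf_le hbdd ⟨T x, mem_range_self T x⟩)
    obtain ⟨x', rfl⟩ := hw
    exact h x'
  · intro h x'
    rw [h]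
    exact ciInf_le hbdd ⟨T x', mem_range_self T x'⟩

theorem enorm2_eq_norm_toLp {ι : Type*} [Fintype ι] (v : ι → ℝ) :
    enorm2 v = ‖WithLp.toLp 2 v‖ := by
  simp [enorm2, EuclideanSpace.norm_eq]

theorem Matrix.forall_enorm2_mulVec_sub_le_iff {ι κ : Type*} [Fintype ι] [Fintype κ]
    (A : Matrix κ ι ℝ) (b : κ → ℝ) (x : ι → ℝ) :
    (∀ x', enorm2 (A *ᵥ x - b) ≤ enorm2 (A *ᵥ x' - b)) ↔ (Aᵀ * A) *ᵥ x = Aᵀ *ᵥ b := by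
  let T := (WithLp.linearEquiv 2 ℝ (κ → ℝ)).symm.toLinearMap ∘ₗ A.mulVecLin
  have hnorm : ∀ y, enorm2 (A *ᵥ y - b) = ‖WithLp.toLp 2 b - T y‖ := fun y => by
    rw [enorm2_eq_norm_toLp, WithLp.toLp_sub, norm_sub_rev]; rfl
  have hinner :
      ∀ y, inner ℝ (WithLp.toLp 2 b - T x) (T y) = Aᵀ *ᵥ (b - A *ᵥ x) ⬝ᵥ y := fun y => by
    rw [mulVec_transpose, ← dotProduct_mulVec, ← WithLp.toLp_sub,
      EuclideanSpace.inner_toLp_toLp, star_trivial, dotProduct_comm]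
    rfl
  simp only [hnorm, T.forall_norm_sub_le_iff_inner_eq_zero, hinner, dotProduct_eq_zero_iff]
  rw [mulVec_sub, mulVec_mulVec, sub_eq_zero, eq_comm]

/-- If the null space of `B` equals the null space of `Aᵀ`, then the unmatched
("not-normal") system `BAx = Bb` has exactly the same solutions as the normal
equations `AᵀAx = Aᵀb`; hence its solutions are precisely the least-squares
solutions of `Ax ≈ b`. -/
theorem stmt_12 (m n : ℕ) (A : Matrix (Fin m) (Fin n) ℝ) (B : Matrix (Fin n) (Fin m) ℝ)
    (b : Fin m → ℝ)
    (hker : LinearMap.ker B.mulVecLin = LinearMap.ker (Aᵀ).mulVecLin) :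
    ∀ x : Fin n → ℝ,
      (((B * A).mulVec x = B.mulVec b) ↔ ((Aᵀ * A).mulVec x = Aᵀ.mulVec b)) ∧
      (((B * A).mulVec x = B.mulVec b) ↔
        ∀ x' : Fin n → ℝ, enorm2 (A.mulVec x - b) ≤ enorm2 (A.mulVec x' - b)) := by
  intro x
  have hnotNormal : (B * A) *ᵥ x = B *ᵥ b ↔ (Aᵀ * A) *ᵥ x = Aᵀ *ᵥ b := by
    simpa only [← mulVec_mulVec, mulVecLin_apply] using
      LinearMap.apply_eq_apply_iff_of_ker_eq hker (A *ᵥ x) b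
  exact ⟨hnotNormal, hnotNormal.trans (A.forall_enorm2_mulVec_sub_le_iff b x).symm⟩
end
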